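/- arXiv:quant-ph/0303167 — 2 statements merged into one kernel-verified Lean document; each statement's English description precedes it below -/
import Mathlib

section
/- Let {k_μ}_{μ=1}^m be a rank-1 POVM on ℂ^d that admits a product Naimark extension. For each μ let p^μ_1, …, p^μ_{K(μ)} ≥ 0 be a probability distribution (∑_l p^μ_l = 1). Then the family {√(p^μ_l)·k_μ}_{μ=1,…,m; l=1,…,K(μ)} is a rank-1 POVM on ℂ^d, and it also admits a product Naimark extension. -/
open scoped InnerProductSpace

/-- The rank-one operator `|k⟩⟨k| : x ↦ ⟨k, x⟩ • k` on `ℂ^d`. -/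
noncomputable def rankOne {d : ℕ} (k : EuclideanSpace ℂ (Fin d)) :
    EuclideanSpace ℂ (Fin d) →ₗ[ℂ] EuclideanSpace ℂ (Fin d) where
  toFun x := ⟪k, x⟫_ℂ • k
  map_add' x y := by simp [inner_add_right, add_smul]
  map_smul' c x := by simp [inner_smul_right, smul_smul]

/-- The product vector `ψ ⊗ a` in `ℂ^d ⊗ ℂ^e`, modeled as `ℂ^{d·e}`. -/
def tp {d e : ℕ} (ψ : EuclideanSpace ℂ (Fin d)) (a : EuclideanSpace ℂ (Fin e)) :
    EuclideanSpace ℂ (Fin d × Fin e) :=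
  WithLp.toLp 2 (fun p => ψ p.1 * a p.2)

/-- The family `{k_μ}_{μ ∈ ι}` is a rank-1 POVM on `ℂ^d`: `∑_μ |k_μ⟩⟨k_μ| = I`. -/
def IsPOVM {d : ℕ} {ι : Type*} [Fintype ι] (k : ι → EuclideanSpace ℂ (Fin d)) : Prop :=
  ∑ μ, rankOne (k μ) = LinearMap.id

/-- The rank-1 POVM `{k_μ}_{μ ∈ ι}` on `ℂ^d` admits a *product Naimark extension*
(equivalently, has zero entanglement cost): for some ancilla dimension `e` and unit
vector `a₀ ∈ ℂ^e`, there is an orthonormal basis of `ℂ^d ⊗ ℂ^e` (indexed by `ι` plus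
`t` further indices, `card ι + t = d·e`) whose `ι`-members `w_μ` satisfy
`|⟨ψ ⊗ a₀, w_μ⟩|² = |⟨ψ, k_μ⟩|²` and are product vectors, the remaining members being
orthogonal to every `ψ ⊗ a₀`. -/
def HasProductNaimark {d : ℕ} {ι : Type*} [Fintype ι]
    (k : ι → EuclideanSpace ℂ (Fin d)) : Prop :=
  ∃ (e t : ℕ) (a₀ : EuclideanSpace ℂ (Fin e))
    (w : ι ⊕ Fin t → EuclideanSpace ℂ (Fin d × Fin e)),
    ‖a₀‖ = 1 ∧ Fintype.card ι + t = d * e ∧ Orthonormal ℂ w ∧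
    (∀ (μ : ι) (ψ : EuclideanSpace ℂ (Fin d)),
      ‖⟪tp ψ a₀, w (Sum.inl μ)⟫_ℂ‖ ^ 2 = ‖⟪ψ, k μ⟫_ℂ‖ ^ 2) ∧
    (∀ (ν : Fin t) (ψ : EuclideanSpace ℂ (Fin d)), ⟪tp ψ a₀, w (Sum.inr ν)⟫_ℂ = 0) ∧
    (∀ μ : ι, ∃ (x : EuclideanSpace ℂ (Fin d)) (y : EuclideanSpace ℂ (Fin e)),
      w (Sum.inl μ) = tp x y)


noncomputable section PostProcessingAux

private def tpow' {e N : ℕ} (a : EuclideanSpace ℂ (Fin e)) (b : EuclideanSpace ℂ (Fin N)) :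
    EuclideanSpace ℂ (Fin (e * N)) :=
  WithLp.toLp 2 (fun j => a (finProdFinEquiv.symm j).1 * b (finProdFinEquiv.symm j).2)

private def tens' {d e N : ℕ} (v : EuclideanSpace ℂ (Fin d × Fin e))
    (s : EuclideanSpace ℂ (Fin N)) : EuclideanSpace ℂ (Fin d × Fin (e * N)) :=
  WithLp.toLp 2 (fun q => v (q.1, (finProdFinEquiv.symm q.2).1) * s (finProdFinEquiv.symm q.2).2)

private lemma inner_tpow' {e N : ℕ} (a a' : EuclideanSpace ℂ (Fin e))
    (b b' : EuclideanSpace ℂ (Fin N)) :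
    ⟪tpow' a b, tpow' a' b'⟫_ℂ = ⟪a, a'⟫_ℂ * ⟪b, b'⟫_ℂ := by
  simp only [PiLp.inner_apply, RCLike.inner_apply', tpow', PiLp.toLp_apply, map_mul]
  rw [Fintype.sum_mul_sum]
  trans ∑ x : Fin e × Fin N, (starRingEnd ℂ) (a x.1) * (starRingEnd ℂ) (b x.2) *
    (a' x.1 * b' x.2)
  · exact Fintype.sum_equiv finProdFinEquiv.symm _ _ fun j => rfl
  · rw [Fintype.sum_prod_type]
    exact Finset.sum_congr rfl fun i _ => Finset.sum_congr rfl fun j _ => by ring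

private lemma inner_tens' {d e N : ℕ} (v v' : EuclideanSpace ℂ (Fin d × Fin e))
    (s s' : EuclideanSpace ℂ (Fin N)) :
    ⟪tens' v s, tens' v' s'⟫_ℂ = ⟪v, v'⟫_ℂ * ⟪s, s'⟫_ℂ := by
  simp only [PiLp.inner_apply, RCLike.inner_apply', tens', PiLp.toLp_apply, map_mul]
  rw [Fintype.sum_mul_sum]
  trans ∑ x : (Fin d × Fin e) × Fin N,
    (starRingEnd ℂ) (v x.1) * (starRingEnd ℂ) (s x.2) * (v' x.1 * s' x.2)
  · refine Fintype.sum_equiv (((Equiv.refl (Fin d)).prodCongr finProdFinEquiv.symm).trans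
      (Equiv.prodAssoc _ _ _).symm) _ _ fun q => ?_
    rfl
  · rw [Fintype.sum_prod_type]
    exact Finset.sum_congr rfl fun i _ => Finset.sum_congr rfl fun j _ => by ring

private lemma norm_one_of_inner {n : ℕ} (x : EuclideanSpace ℂ (Fin n))
    (h : ⟪x, x⟫_ℂ = 1) : ‖x‖ = 1 := by
  rw [@norm_eq_sqrt_re_inner ℂ, h]
  simp

private lemma tp_tpow' {d e N : ℕ} (ψ : EuclideanSpace ℂ (Fin d))
    (a : EuclideanSpace ℂ (Fin e)) (b : EuclideanSpace ℂ (Fin N)) :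
    tp ψ (tpow' a b) = tens' (tp ψ a) b := by
  ext q
  simp [tp, tpow', tens', mul_assoc]

private lemma tens'_tp {d e N : ℕ} (x : EuclideanSpace ℂ (Fin d))
    (y : EuclideanSpace ℂ (Fin e)) (s : EuclideanSpace ℂ (Fin N)) :
    tens' (tp x y) s = tp x (tpow' y s) := by
  ext q
  simp [tp, tpow', tens', mul_assoc]

/-- Existence of an orthonormal family in `ℂ^N` whose `0`-components realise the
prescribed square roots of probabilities (padded by zeros). -/
private lemma exists_u {N Kμ : ℕ} (hN : 0 < N) (hK : Kμ ≤ N) (q : Fin Kμ → ℝ)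
    (hq : ∀ l, 0 ≤ q l) (hqs : ∑ l, q l = 1) :
    ∃ u : Fin N → EuclideanSpace ℂ (Fin N), Orthonormal ℂ u ∧
      ∀ l : Fin N, u l ⟨0, hN⟩ =
        if h : (l : ℕ) < Kμ then ((Real.sqrt (q ⟨l, h⟩) : ℝ) : ℂ) else 0 := by
  classical
  set f : ℕ → ℂ := fun j => if h : j < Kμ then ((Real.sqrt (q ⟨j, h⟩) : ℝ) : ℂ) else 0 with hf
  set g : ℕ → ℂ := fun n => if h : n < Kμ then ((q ⟨n, h⟩ : ℝ) : ℂ) else 0 with hg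
  set v₀ : EuclideanSpace ℂ (Fin N) := WithLp.toLp 2 (fun j => f (j : ℕ)) with hv₀
  have hfsum : ∑ j : Fin N, (starRingEnd ℂ) (v₀ j) * v₀ j = 1 := by
    have hconj : ∀ j : Fin N, (starRingEnd ℂ) (v₀ j) * v₀ j = g (j : ℕ) := by
      intro j
      by_cases h : (j : ℕ) < Kμ
      · simp only [hv₀, hf, hg, dif_pos h, Complex.conj_ofReal, ← Complex.ofReal_mul,
          Real.mul_self_sqrt (hq _)]
      · simp [hv₀, hf, hg, dif_neg h]
    rw [Finset.sum_congr rfl fun j _ => hconj j]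
    rw [Fin.sum_univ_eq_sum_range g N]
    rw [← Finset.sum_subset (Finset.range_subset_range.2 hK)
      (fun x _ hx => dif_neg (by simpa using hx))]
    rw [← Fin.sum_univ_eq_sum_range g Kμ]
    have hgl : ∀ l : Fin Kμ, g (l : ℕ) = ((q l : ℝ) : ℂ) := by
      intro l
      simp only [hg, dif_pos l.isLt, Fin.eta]
    rw [Finset.sum_congr rfl fun l _ => hgl l, ← Complex.ofReal_sum, hqs,
      Complex.ofReal_one]
  have hnorm : ‖v₀‖ = 1 := norm_one_of_inner v₀ (by
    simp only [PiLp.inner_apply, RCLike.inner_apply']; exact hfsum)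
  have horth : Orthonormal ℂ (({⟨0, hN⟩} : Set (Fin N)).restrict
      (fun _ : Fin N => v₀)) :=
    ⟨fun i => hnorm, fun i j hij => absurd (Subsingleton.elim i j) hij⟩
  obtain ⟨b, hb⟩ := horth.exists_orthonormalBasis_extension_of_card_eq
    (by simp [finrank_euclideanSpace]) (s := ({⟨0, hN⟩} : Set (Fin N)))
  have hb0 : b ⟨0, hN⟩ = v₀ := hb _ rfl
  set u : Fin N → EuclideanSpace ℂ (Fin N) := fun l => WithLp.toLp 2 (fun j => (starRingEnd ℂ) (b j l)) with hu
  refine ⟨u, ?_, ?_⟩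
  · rw [orthonormal_iff_ite]
    intro l l'
    have key := b.sum_inner_mul_inner (EuclideanSpace.single l (1 : ℂ))
      (EuclideanSpace.single l' (1 : ℂ))
    simp only [EuclideanSpace.inner_single_left, EuclideanSpace.inner_single_right,
      map_one, one_mul, mul_one] at key
    have hul : ⟪u l, u l'⟫_ℂ = ∑ j, b j l * (starRingEnd ℂ) (b j l') := by
      simp [hu, PiLp.inner_apply, RCLike.inner_apply']
      exact Finset.sum_congr rfl fun _ _ => mul_comm _ _
    rw [hul, key, EuclideanSpace.single_apply]
    by_cases h : l = l' <;> simp [h, eq_comm]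
  · intro l
    have : u l ⟨0, hN⟩ = (starRingEnd ℂ) (v₀ l) := by rw [hu]; simp [hb0]
    rw [this, hv₀]
    by_cases h : (l : ℕ) < Kμ <;> simp [hf, h, Complex.conj_ofReal]

end PostProcessingAux

/-- If the rank-1 POVM `{k_μ}_{μ=1}^m` on `ℂ^d` admits a product
Naimark extension, and for each `μ` we have a probability distribution
`p^μ_1, …, p^μ_{K(μ)}`, then the refined family `{√(p^μ_l)·k_μ}_{(μ,l)}` is again a
rank-1 POVM on `ℂ^d` admitting a product Naimark extension. -/
theorem classical_post_processing_zero_cost {d m : ℕ}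
    (k : Fin m → EuclideanSpace ℂ (Fin d)) (hk : IsPOVM k)
    (hprod : HasProductNaimark k)
    (K : Fin m → ℕ) (p : (μ : Fin m) → Fin (K μ) → ℝ)
    (hp : ∀ μ l, 0 ≤ p μ l) (hps : ∀ μ, ∑ l, p μ l = 1) :
    IsPOVM (fun q : Σ μ : Fin m, Fin (K μ) => (Real.sqrt (p q.1 q.2) : ℂ) • k q.1) ∧
    HasProductNaimark
      (fun q : Σ μ : Fin m, Fin (K μ) => (Real.sqrt (p q.1 q.2) : ℂ) • k q.1) := by
  classical
  have hro : ∀ (c : ℝ), 0 ≤ c → ∀ v : EuclideanSpace ℂ (Fin d),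
      rankOne ((Real.sqrt c : ℂ) • v) = ((c : ℝ) : ℂ) • rankOne v := by
    intro c hc v
    apply LinearMap.ext
    intro x
    show ⟪(Real.sqrt c : ℂ) • v, x⟫_ℂ • ((Real.sqrt c : ℂ) • v)
        = ((c : ℝ) : ℂ) • (⟪v, x⟫_ℂ • v)
    rw [inner_smul_left, Complex.conj_ofReal, smul_smul, smul_smul]
    congr 1
    rw [mul_comm, ← mul_assoc, ← Complex.ofReal_mul, Real.mul_self_sqrt hc]
  have hpovm : IsPOVM
      (fun q : Σ μ : Fin m, Fin (K μ) => (Real.sqrt (p q.1 q.2) : ℂ) • k q.1) := by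
    unfold IsPOVM
    rw [← Finset.univ_sigma_univ, Finset.sum_sigma]
    have hμ : ∀ μ : Fin m, ∑ l : Fin (K μ), rankOne ((Real.sqrt (p μ l) : ℂ) • k μ)
        = rankOne (k μ) := by
      intro μ
      calc ∑ l, rankOne ((Real.sqrt (p μ l) : ℂ) • k μ)
          = ∑ l, ((p μ l : ℝ) : ℂ) • rankOne (k μ) :=
            Finset.sum_congr rfl fun l _ => hro _ (hp μ l) _
        _ = ((∑ l, p μ l : ℝ) : ℂ) • rankOne (k μ) := by
            rw [← Finset.sum_smul, ← Complex.ofReal_sum]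
        _ = rankOne (k μ) := by rw [hps μ]; simp
    rw [Finset.sum_congr rfl fun μ _ => hμ μ]
    exact hk
  refine ⟨hpovm, ?_⟩
  obtain ⟨e, t, a₀, w, ha₀, hcard, hw, habs, hker, hxy⟩ := hprod
  set N : ℕ := Finset.univ.sup K + 1 with hN_def
  have hN : 0 < N := Nat.succ_pos _
  have hKN : ∀ μ, K μ ≤ N := fun μ =>
    le_trans (Finset.le_sup (Finset.mem_univ μ)) (Nat.le_succ _)
  set b₀ : EuclideanSpace ℂ (Fin N) := EuclideanSpace.single ⟨0, hN⟩ (1 : ℂ) with hb₀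
  choose u hu hu0 using fun μ : Fin m => exists_u hN (hKN μ) (p μ) (hp μ) (hps μ)
  have hstd : Orthonormal ℂ (fun l : Fin N => EuclideanSpace.single l (1 : ℂ)) := by
    have h := (EuclideanSpace.basisFun (Fin N) ℂ).orthonormal
    have hfn : ⇑(EuclideanSpace.basisFun (Fin N) ℂ)
        = fun l : Fin N => EuclideanSpace.single l (1 : ℂ) := by
      funext l
      exact EuclideanSpace.basisFun_apply _ _ l
    rw [← hfn]
    exact h
  set S : (Fin m ⊕ Fin t) → Fin N → EuclideanSpace ℂ (Fin N) :=
    Sum.elim u (fun _ => fun l => EuclideanSpace.single l (1 : ℂ)) with hS_def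
  have hS : ∀ α, Orthonormal ℂ (S α) := by
    rintro (μ | ν)
    · exact hu μ
    · exact hstd
  set W : (Fin m ⊕ Fin t) × Fin N → EuclideanSpace ℂ (Fin d × Fin (e * N)) :=
    fun j => tens' (w j.1) (S j.1 j.2) with hW_def
  have hwv := orthonormal_iff_ite.mp hw
  have hW : Orthonormal ℂ W := by
    rw [orthonormal_iff_ite]
    rintro ⟨α, l⟩ ⟨α', l'⟩
    simp only [hW_def]
    rw [inner_tens']
    rcases eq_or_ne α α' with rfl | hne
    · rw [hwv α α, if_pos rfl, one_mul, orthonormal_iff_ite.mp (hS α) l l']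
      by_cases h : l = l' <;> simp [h, Prod.ext_iff]
    · rw [hwv α α', if_neg hne, zero_mul,
        if_neg (by simp [Prod.ext_iff, hne] : ¬ ((α, l) = (α', l')))]
  set g : (Σ μ : Fin m, Fin (K μ)) → (Fin m ⊕ Fin t) × Fin N :=
    fun q => (Sum.inl q.1, Fin.castLE (hKN q.1) q.2) with hg_def
  have hg : Function.Injective g := by
    rintro ⟨μ, l⟩ ⟨μ', l'⟩ h
    have h1 : Sum.inl (β := Fin t) μ = Sum.inl μ' := congrArg Prod.fst h
    obtain rfl : μ = μ' := by simpa using h1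
    have h2 : ((Fin.castLE (hKN μ) l : Fin N) : ℕ) = ((Fin.castLE (hKN μ) l' : Fin N) : ℕ) :=
      congrArg (fun x : (Fin m ⊕ Fin t) × Fin N => ((x.2 : Fin N) : ℕ)) h
    have h3 : l = l' := Fin.ext (by simpa using h2)
    rw [h3]
  have hmt : m + t = d * e := by simpa using hcard
  have hcardJ : Fintype.card ((Fin m ⊕ Fin t) × Fin N) = d * (e * N) := by
    rw [Fintype.card_prod, Fintype.card_sum, Fintype.card_fin, Fintype.card_fin,
      Fintype.card_fin, hmt, mul_assoc]
  have hle : Fintype.card (Σ μ : Fin m, Fin (K μ)) ≤ d * (e * N) := by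
    rw [← hcardJ]
    exact Fintype.card_le_of_injective g hg
  set t' := d * (e * N) - Fintype.card (Σ μ : Fin m, Fin (K μ)) with ht'_def
  have ht' : Fintype.card (Σ μ : Fin m, Fin (K μ)) + t' = d * (e * N) :=
    Nat.add_sub_cancel' hle
  have hJc : Fintype.card {j : (Fin m ⊕ Fin t) × Fin N // j ∉ Set.range g} = t' := by
    rw [ht'_def]
    have h1 : Fintype.card {j : (Fin m ⊕ Fin t) × Fin N // j ∈ Set.range g}
        = Fintype.card (Σ μ : Fin m, Fin (K μ)) :=
      (Fintype.card_congr (Equiv.ofInjective g hg)).symm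
    rw [Fintype.card_subtype_compl, h1, hcardJ]
  set φ : Fin t' ≃ {j : (Fin m ⊕ Fin t) × Fin N // j ∉ Set.range g} :=
    (Fintype.equivFinOfCardEq hJc).symm with hφ_def
  set ρ : (Σ μ : Fin m, Fin (K μ)) ⊕ Fin t' → (Fin m ⊕ Fin t) × Fin N :=
    Sum.elim g (fun ν => (φ ν : (Fin m ⊕ Fin t) × Fin N)) with hρ_def
  have hρ : Function.Injective ρ := by
    rintro (q | ν) (q' | ν') h
    · exact congrArg Sum.inl (hg h)
    · exact absurd ⟨q, h⟩ (φ ν').2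
    · exact absurd ⟨q', h.symm⟩ (φ ν).2
    · exact congrArg Sum.inr (φ.injective (Subtype.ext h))
  refine ⟨e * N, t', tpow' a₀ b₀, fun i => W (ρ i), ?_, ?_, ?_, ?_, ?_, ?_⟩
  · apply norm_one_of_inner
    rw [inner_tpow']
    have h1 : ⟪a₀, a₀⟫_ℂ = 1 := by
      rw [@inner_self_eq_norm_sq_to_K ℂ, ha₀]
      norm_num
    have h2 : ⟪b₀, b₀⟫_ℂ = 1 := by
      rw [@inner_self_eq_norm_sq_to_K ℂ, hb₀, EuclideanSpace.norm_single]
      norm_num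
    rw [h1, h2, one_mul]
  · exact ht'
  · exact hW.comp ρ hρ
  · rintro ⟨μ, l⟩ ψ
    have hwval : (fun i => W (ρ i)) (Sum.inl ⟨μ, l⟩)
        = tens' (w (Sum.inl μ)) (u μ (Fin.castLE (hKN μ) l)) := rfl
    rw [hwval, tp_tpow', inner_tens']
    have hb0u : ⟪b₀, u μ (Fin.castLE (hKN μ) l)⟫_ℂ = ((Real.sqrt (p μ l) : ℝ) : ℂ) := by
      rw [hb₀, EuclideanSpace.inner_single_left, map_one, one_mul, hu0 μ _,
        dif_pos (by simp : ((Fin.castLE (hKN μ) l : Fin N) : ℕ) < K μ)]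
      simp
    rw [hb0u, norm_mul, mul_pow, habs μ ψ, inner_smul_right, norm_mul, mul_pow]
    have habs2 : ‖((Real.sqrt (p μ l) : ℝ) : ℂ)‖ ^ 2 = p μ l := by
      rw [Complex.norm_real, Real.norm_of_nonneg (Real.sqrt_nonneg _), Real.sq_sqrt (hp μ l)]
    rw [habs2]
    ring
  · intro ν ψ
    have hwval : (fun i => W (ρ i)) (Sum.inr ν)
        = tens' (w (φ ν : (Fin m ⊕ Fin t) × Fin N).1)
            (S (φ ν : (Fin m ⊕ Fin t) × Fin N).1 (φ ν : (Fin m ⊕ Fin t) × Fin N).2) := rfl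
    rw [hwval, tp_tpow', inner_tens']
    rcases hα : (φ ν : (Fin m ⊕ Fin t) × Fin N).1 with μ | ν'
    · have hnot : ¬ (((φ ν : (Fin m ⊕ Fin t) × Fin N).2 : ℕ) < K μ) := by
        intro hlt
        refine (φ ν).2 ⟨⟨μ, ⟨((φ ν : (Fin m ⊕ Fin t) × Fin N).2 : ℕ), hlt⟩⟩, ?_⟩
        simp only [hg_def]
        refine Prod.ext ?_ ?_
        · exact hα.symm
        · exact Fin.ext (by simp)
      have hz : ⟪b₀, S (Sum.inl μ) (φ ν : (Fin m ⊕ Fin t) × Fin N).2⟫_ℂ = 0 := by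
        show ⟪b₀, u μ (φ ν : (Fin m ⊕ Fin t) × Fin N).2⟫_ℂ = 0
        rw [hb₀, EuclideanSpace.inner_single_left, map_one, one_mul, hu0 μ _,
          dif_neg hnot]
      rw [hz, mul_zero]
    · rw [hker ν' ψ, zero_mul]
  · rintro ⟨μ, l⟩
    obtain ⟨x, y, hxy'⟩ := hxy μ
    refine ⟨x, tpow' y (u μ (Fin.castLE (hKN μ) l)), ?_⟩
    have hwval : (fun i => W (ρ i)) (Sum.inl ⟨μ, l⟩)
        = tens' (w (Sum.inl μ)) (u μ (Fin.castLE (hKN μ) l)) := rfl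
    rw [hwval, hxy', tens'_tp]
end

section
/- Let d ≥ 2 and let {k_μ}_{μ=1}^m be a rank-1 POVM on ℂ^d. Suppose there exists an index μ with k_μ ≠ 0 such that ⟨k_μ, k_ν⟩ ≠ 0 for every ν ≠ μ. Then the POVM admits no product Naimark extension (for any ancilla dimension e and any basic ancilla state a₀), i.e. it has non-zero entanglement cost. -/
open scoped InnerProductSpace

lemma tp_inner {d e : ℕ} (ψ x : EuclideanSpace ℂ (Fin d)) (a y : EuclideanSpace ℂ (Fin e)) :
    ⟪tp ψ a, tp x y⟫_ℂ = ⟪ψ, x⟫_ℂ * ⟪a, y⟫_ℂ := by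
  simp only [PiLp.inner_apply, RCLike.inner_apply, tp, Fintype.sum_prod_type,
    Finset.sum_mul_sum]
  apply Finset.sum_congr rfl
  intro i _
  apply Finset.sum_congr rfl
  intro j _
  simp only [map_mul]
  ring

/-- Let `d ≥ 2` and let `{k_μ}_{μ=1}^m` be a rank-1 POVM on `ℂ^d`.
If some `k_μ ≠ 0` is non-orthogonal to every other element, then the POVM admits no
product Naimark extension (it has non-zero entanglement cost). -/
theorem no_orthogonal_partner_nonzero_cost {d m : ℕ} (hd : 2 ≤ d)
    (k : Fin m → EuclideanSpace ℂ (Fin d)) (hk : IsPOVM k)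
    (h : ∃ μ : Fin m, k μ ≠ 0 ∧ ∀ ν : Fin m, ν ≠ μ → ⟪k μ, k ν⟫_ℂ ≠ 0) :
    ¬ HasProductNaimark k := by
  obtain ⟨μ₀, hk0, hnz⟩ := h
  rintro ⟨e, t, a₀, w, ha₀, hcard, horth, habs, hperp, hprod⟩
  choose x y hw using hprod
  -- key scalar relation: ⟪ψ, x μ⟫ * ⟪a₀, y μ⟫ = 0 ↔ ⟪ψ, k μ⟫ = 0, plus abs equality
  have hrel : ∀ (μ : Fin m) (ψ : EuclideanSpace ℂ (Fin d)),
      ‖⟪ψ, x μ⟫_ℂ * ⟪a₀, y μ⟫_ℂ‖ = ‖⟪ψ, k μ⟫_ℂ‖ := by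
    intro μ ψ
    have := habs μ ψ
    rw [hw μ, tp_inner] at this
    have h1 := Real.sqrt_sq (norm_nonneg (⟪ψ, x μ⟫_ℂ * ⟪a₀, y μ⟫_ℂ))
    have h2 := Real.sqrt_sq (norm_nonneg ⟪ψ, k μ⟫_ℂ)
    rw [← h1, ← h2, this]
  have hrel0 : ∀ (μ : Fin m) (ψ : EuclideanSpace ℂ (Fin d)),
      ⟪ψ, x μ⟫_ℂ * ⟪a₀, y μ⟫_ℂ = 0 ↔ ⟪ψ, k μ⟫_ℂ = 0 := by
    intro μ ψ
    rw [← norm_eq_zero, hrel μ ψ, norm_eq_zero]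
  -- ⟪a₀, y μ₀⟫ ≠ 0 and ⟪k μ₀, x μ₀⟫ ≠ 0
  have hself : ⟪k μ₀, k μ₀⟫_ℂ ≠ 0 := inner_self_ne_zero.mpr hk0
  have hy0 : ⟪a₀, y μ₀⟫_ℂ ≠ 0 := by
    intro hzero
    exact hself (((hrel0 μ₀ (k μ₀)).mp (by rw [hzero, mul_zero])))
  -- for ν ≠ μ₀, ⟪k μ₀, x ν⟫ ≠ 0
  have hkx : ∀ ν : Fin m, ν ≠ μ₀ → ⟪k μ₀, x ν⟫_ℂ ≠ 0 := by
    intro ν hν hzero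
    exact hnz ν hν (((hrel0 ν (k μ₀)).mp (by rw [hzero, zero_mul])))
  -- for ν ≠ μ₀, ⟪x μ₀, x ν⟫ ≠ 0
  have hxx : ∀ ν : Fin m, ν ≠ μ₀ → ⟪x μ₀, x ν⟫_ℂ ≠ 0 := by
    intro ν hν hzero
    have h1 : ⟪x ν, x μ₀⟫_ℂ = 0 := by
      rw [← inner_conj_symm, hzero, map_zero]
    have h2 : ⟪x ν, k μ₀⟫_ℂ = 0 := (hrel0 μ₀ (x ν)).mp (by rw [h1, zero_mul])
    have : ⟪k μ₀, x ν⟫_ℂ = 0 := by rw [← inner_conj_symm, h2, map_zero]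
    exact hkx ν hν this
  -- for ν ≠ μ₀, ⟪y μ₀, y ν⟫ = 0
  have hyy : ∀ ν : Fin m, ν ≠ μ₀ → ⟪y μ₀, y ν⟫_ℂ = 0 := by
    intro ν hν
    have h0 : ⟪w (Sum.inl μ₀), w (Sum.inl ν)⟫_ℂ = 0 :=
      horth.2 (by simp [hν.symm])
    rw [hw μ₀, hw ν, tp_inner] at h0
    rcases mul_eq_zero.mp h0 with h1 | h1
    · exact absurd h1 (hxx ν hν)
    · exact h1
  -- find ψ ≠ 0 orthogonal to k μ₀
  obtain ⟨ψ, hψmem, hψ0⟩ : ∃ ψ ∈ (ℂ ∙ k μ₀)ᗮ, ψ ≠ 0 := by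
    rw [← Submodule.ne_bot_iff]
    intro hbot
    have hfr := Submodule.finrank_add_finrank_orthogonal (K := (ℂ ∙ k μ₀))
    rw [hbot, finrank_bot, finrank_span_singleton hk0, finrank_euclideanSpace] at hfr
    simp at hfr
    omega
  have hkψ : ⟪k μ₀, ψ⟫_ℂ = 0 :=
    hψmem (k μ₀) (Submodule.mem_span_singleton_self _)
  have hψk : ∀ μ : Fin m, ⟪ψ, k μ₀⟫_ℂ = 0 := fun _ => by
    rw [← inner_conj_symm, hkψ, map_zero]
  -- build the orthonormal basis
  haveI : Nonempty (Fin m ⊕ Fin t) := ⟨Sum.inl μ₀⟩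
  have hcard' : Fintype.card (Fin m ⊕ Fin t)
      = Module.finrank ℂ (EuclideanSpace ℂ (Fin d × Fin e)) := by
    simp [finrank_euclideanSpace]
    simpa using hcard
  let B := (basisOfOrthonormalOfCardEqFinrank horth hcard').toOrthonormalBasis
    (by rwa [coe_basisOfOrthonormalOfCardEqFinrank])
  have hB : ∀ ν, B ν = w ν := by
    intro ν
    have : (B : (Fin m ⊕ Fin t) → EuclideanSpace ℂ (Fin d × Fin e)) = w := by
      rw [Module.Basis.coe_toOrthonormalBasis, coe_basisOfOrthonormalOfCardEqFinrank]
    exact congrFun this ν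
  set v : EuclideanSpace ℂ (Fin d × Fin e) := tp ψ a₀ with hv
  have hexp : ∑ ν, ⟪w ν, v⟫_ℂ • w ν = v := by
    have := B.sum_repr' v
    simpa [hB] using this
  -- compute ⟪tp ψ (y μ₀), v⟫ two ways
  set z : EuclideanSpace ℂ (Fin d × Fin e) := tp ψ (y μ₀) with hz
  have hdirect : ⟪z, v⟫_ℂ = ⟪ψ, ψ⟫_ℂ * ⟪y μ₀, a₀⟫_ℂ := by
    rw [hz, hv, tp_inner]
  have hzero : ⟪z, v⟫_ℂ = 0 := by
    rw [← hexp, inner_sum]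
    apply Finset.sum_eq_zero
    intro ν _
    rw [inner_smul_right]
    rcases ν with μ | ν
    · by_cases hμ : μ = μ₀
      · subst hμ
        have hc : ⟪v, w (Sum.inl μ)⟫_ℂ = 0 := by
          have := habs μ ψ
          rw [hψk μ] at this
          simp only [norm_zero] at this
          have h2 : ‖⟪tp ψ a₀, w (Sum.inl μ)⟫_ℂ‖ = 0 := by
            nlinarith [norm_nonneg ⟪tp ψ a₀, w (Sum.inl μ)⟫_ℂ]
          rwa [norm_eq_zero] at h2
        have : ⟪w (Sum.inl μ), v⟫_ℂ = 0 := by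
          rw [← inner_conj_symm, hc, map_zero]
        rw [this, zero_mul]
      · have : ⟪z, w (Sum.inl μ)⟫_ℂ = 0 := by
          rw [hz, hw μ, tp_inner, hyy μ hμ, mul_zero]
        rw [this, mul_zero]
    · have : ⟪w (Sum.inr ν), v⟫_ℂ = 0 := by
        rw [← inner_conj_symm, hperp ν ψ, map_zero]
      rw [this, zero_mul]
  rw [hdirect] at hzero
  rcases mul_eq_zero.mp hzero with h1 | h1
  · exact inner_self_ne_zero.mpr hψ0 h1
  · exact hy0 (by rw [← inner_conj_symm, h1, map_zero])
end
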